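/- Let G = (V,E) be the directed spanner instance built from a projection games instance in which every vertex of L has degree exactly K ≥ 1, with parameter k ≥ 2. If S ⊆ E is a (2k−1)-spanner of G, then there exists a (2k−1)-spanner S' of G with S' ∩ E_Outer = ∅ and |S'| ≤ 3·|S|. -/

import Mathlib

open Finset

/-- A directed path in the graph with edge set `E`, from `u` to `v`, given as its (nonempty)
list of edges: consecutive edges are incident, the first edge starts at `u`, the last edge ends
at `v`, and no vertex is visited twice. -/
def IsDirPath {V : Type*} [DecidableEq V] (E : Finset (V × V)) (u v : V)
    (p : List (V × V)) : Prop :=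
  p ≠ [] ∧ (∀ e ∈ p, e ∈ E) ∧ Option.map Prod.fst p.head? = some u ∧
    Option.map Prod.snd p.getLast? = some v ∧
    List.Chain' (fun e f => e.2 = f.1) p ∧ (u :: p.map Prod.snd).Nodup

/-- `z ∈ Z^{u,v}` (with respect to stretch `t`): a fractional cut against the stretch-`t`
paths from `u` to `v`, i.e. `z : E → [0,1]` with `∑_{e ∈ P} z e ≥ 1` for every path
`P ∈ 𝒫_{u,v}` (at most `t` edges). -/
def InZ {V : Type*} [DecidableEq V] (E : Finset (V × V)) (t : ℕ) (u v : V)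
    (z : V × V → ℝ) : Prop :=
  (∀ e ∈ E, 0 ≤ z e ∧ z e ≤ 1) ∧
  ∀ p : List (V × V), IsDirPath E u v p → p.length ≤ t → 1 ≤ (p.map z).sum

/-- A `t`-spanner of the directed graph with edge set `E`: a subset `S ⊆ E` such that every
edge `(u,v) ∈ E` is spanned by a directed path from `u` to `v` of at most `t` edges,
all belonging to `S`. -/
def IsSpanner {V : Type*} [DecidableEq V] (E S : Finset (V × V)) (t : ℕ) : Prop :=
  S ⊆ E ∧ ∀ e ∈ E, ∃ p : List (V × V), IsDirPath S e.1 e.2 p ∧ p.length ≤ t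

/-- The moment matrix `(y_{I ∪ J})`, indexed by the subsets `I, J ⊆ E` with `|I|, |J| ≤ r`. -/
def momentMatrixE {α : Type*} [Fintype α] [DecidableEq α] (E : Finset α) (r : ℕ)
    (y : Finset α → ℝ) :
    Matrix {S : Finset α // S ⊆ E ∧ S.card ≤ r} {S : Finset α // S ⊆ E ∧ S.card ≤ r} ℝ :=
  Matrix.of fun I J => y (I.1 ∪ J.1)

/-- The slack moment matrix `(∑_{e ∈ E} z e · y_{I∪J∪{e}} − y_{I∪J})`, indexed by the subsets
`I, J ⊆ E` with `|I|, |J| ≤ r`. -/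
def slackMatrixE {α : Type*} [Fintype α] [DecidableEq α] (E : Finset α) (r : ℕ)
    (y : Finset α → ℝ) (z : α → ℝ) :
    Matrix {S : Finset α // S ⊆ E ∧ S.card ≤ r} {S : Finset α // S ⊆ E ∧ S.card ≤ r} ℝ :=
  Matrix.of fun I J => (∑ e ∈ E, z e * y (insert e (I.1 ∪ J.1))) - y (I.1 ∪ J.1)

/-- The ambient vertex type for the directed `(2k−1)`-spanner instance built from a projection
games instance with left vertices `L`, right vertices `R` and alphabet `Sg`; `D` is the number
of duplicate vertices (`D = k·K·|Σ|`) and `T` the number of internal vertices of each middle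
path (`T = 2k−4`).  The five summands are: the label vertices `c_{i,σ}`, the duplicate vertices
`c_i^l`, the label vertices `x_{j,σ}`, the duplicate vertices `x_j^l`, and the middle-path
vertices `w_{i,j,σL,σR,t}`. -/
abbrev SpV (L R Sg : Type) (D T : ℕ) : Type :=
  (L × Sg) ⊕ (L × Fin D) ⊕ (R × Sg) ⊕ (R × Fin D) ⊕ (L × R × Sg × Sg × Fin T)

namespace SpV

variable {L R Sg : Type} {D T : ℕ}

/-- The label vertex `c_{i,σ}`. -/
def cLab (i : L) (σ : Sg) : SpV L R Sg D T := Sum.inl (i, σ)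

/-- The duplicate vertex `c_i^l`. -/
def cDup (i : L) (l : Fin D) : SpV L R Sg D T := Sum.inr (Sum.inl (i, l))

/-- The label vertex `x_{j,σ}`. -/
def xLab (j : R) (σ : Sg) : SpV L R Sg D T := Sum.inr (Sum.inr (Sum.inl (j, σ)))

/-- The duplicate vertex `x_j^l`. -/
def xDup (j : R) (l : Fin D) : SpV L R Sg D T :=
  Sum.inr (Sum.inr (Sum.inr (Sum.inl (j, l))))

/-- The middle-path vertex `w_{i,j,σL,σR,t}`. -/
def mid (i : L) (j : R) (σL σR : Sg) (t : Fin T) : SpV L R Sg D T :=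
  Sum.inr (Sum.inr (Sum.inr (Sum.inr (i, j, σL, σR, t))))

end SpV

set_option synthInstance.maxSize 1000 in
instance SpV.instDecidableEq {L R Sg : Type} [DecidableEq L] [DecidableEq R] [DecidableEq Sg]
    {D T : ℕ} : DecidableEq (SpV L R Sg D T) := inferInstance

instance SpV.instFintype {L R Sg : Type} [Fintype L] [Fintype R] [Fintype Sg] {D T : ℕ} :
    Fintype (SpV L R Sg D T) := inferInstance

namespace Spanner

/-- The number `k·K·|Σ|` of duplicate vertices per projection-games vertex. -/
abbrev numDup (Sg : Type) [Fintype Sg] (k K : ℕ) : ℕ := k * K * Fintype.card Sg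

/-- The vertex type of the directed spanner instance with parameters `k, K`. -/
abbrev Vt (L R Sg : Type) [Fintype Sg] (k K : ℕ) : Type :=
  SpV L R Sg (numDup Sg k K) (2 * k - 4)

/-- The edge set `E_L = {(c_i^l, c_{i,σ})}`. -/
def ELedges (L R Sg : Type) [Fintype L] [Fintype R] [Fintype Sg]
    [DecidableEq L] [DecidableEq R] [DecidableEq Sg] (k K : ℕ) :
    Finset (Vt L R Sg k K × Vt L R Sg k K) :=
  Finset.univ.image fun p : L × Fin (numDup Sg k K) × Sg =>
    (SpV.cDup p.1 p.2.1, SpV.cLab p.1 p.2.2)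

/-- The edge set `E_R = {(x_{j,σ}, x_j^l)}`. -/
def ERedges (L R Sg : Type) [Fintype L] [Fintype R] [Fintype Sg]
    [DecidableEq L] [DecidableEq R] [DecidableEq Sg] (k K : ℕ) :
    Finset (Vt L R Sg k K × Vt L R Sg k K) :=
  Finset.univ.image fun p : R × Fin (numDup Sg k K) × Sg =>
    (SpV.xLab p.1 p.2.2, SpV.xDup p.1 p.2.1)

/-- The edge set `E_LStars = {(c_{i,1}, c_{i,σ}), (c_{i,σ}, c_{i,1}) : σ ≠ 1}`
(`σ0` plays the role of the fixed label `1 ∈ Σ`). -/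
def ELStars (L R : Type) {Sg : Type} [Fintype L] [Fintype R] [Fintype Sg]
    [DecidableEq L] [DecidableEq R] [DecidableEq Sg] (σ0 : Sg) (k K : ℕ) :
    Finset (Vt L R Sg k K × Vt L R Sg k K) :=
  ((Finset.univ.filter fun p : L × Sg => p.2 ≠ σ0).image fun p =>
      (SpV.cLab p.1 σ0, SpV.cLab p.1 p.2)) ∪
  ((Finset.univ.filter fun p : L × Sg => p.2 ≠ σ0).image fun p =>
      (SpV.cLab p.1 p.2, SpV.cLab p.1 σ0))

/-- The edge set `E_RStars = {(x_{j,1}, x_{j,σ}), (x_{j,σ}, x_{j,1}) : σ ≠ 1}`. -/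
def ERStars (L R : Type) {Sg : Type} [Fintype L] [Fintype R] [Fintype Sg]
    [DecidableEq L] [DecidableEq R] [DecidableEq Sg] (σ0 : Sg) (k K : ℕ) :
    Finset (Vt L R Sg k K × Vt L R Sg k K) :=
  ((Finset.univ.filter fun p : R × Sg => p.2 ≠ σ0).image fun p =>
      (SpV.xLab p.1 σ0, SpV.xLab p.1 p.2)) ∪
  ((Finset.univ.filter fun p : R × Sg => p.2 ≠ σ0).image fun p =>
      (SpV.xLab p.1 p.2, SpV.xLab p.1 σ0))

/-- The edge set `E_Outer = {(c_i^l, x_j^l) : {c_i, x_j} ∈ E_Proj, l ∈ [kK|Σ|]}`. -/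
def EOuter {L R : Type} (Sg : Type) [Fintype L] [Fintype R] [Fintype Sg]
    [DecidableEq L] [DecidableEq R] [DecidableEq Sg]
    (Eproj : Finset (L × R)) (k K : ℕ) :
    Finset (Vt L R Sg k K × Vt L R Sg k K) :=
  (Eproj ×ˢ (Finset.univ : Finset (Fin (numDup Sg k K)))).image fun p =>
    (SpV.cDup p.1.1 p.2, SpV.xDup p.1.2 p.2)

/-- The vertex sequence `c_{i,σL}, w_{i,j,σL,σR,1}, …, w_{i,j,σL,σR,2k−4}, x_{j,σR}` of the
middle path (for `k = 2` it is just `c_{i,σL}, x_{j,σR}`). -/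
def midVerts {L R Sg : Type} [Fintype Sg] (k K : ℕ) (i : L) (j : R) (σL σR : Sg) :
    List (Vt L R Sg k K) :=
  (SpV.cLab i σL :: (List.finRange (2 * k - 4)).map fun t => SpV.mid i j σL σR t) ++
    [SpV.xLab j σR]

/-- The list of consecutive edges of a vertex sequence. -/
def pathEdges {V : Type*} (vs : List V) : List (V × V) := vs.zip vs.tail

/-- The edge list `E_M^{i,j,σL,σR}` of the middle path from `c_{i,σL}` to `x_{j,σR}`. -/
def EMpath {L R Sg : Type} [Fintype Sg] (k K : ℕ) (i : L) (j : R) (σL σR : Sg) :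
    List (Vt L R Sg k K × Vt L R Sg k K) :=
  pathEdges (midVerts k K i j σL σR)

/-- The edge set `E_M = ⋃_{ {c_i,x_j} ∈ E_Proj, (σL,σR) ∈ π_{i,j} } E_M^{i,j,σL,σR}`. -/
def EMedges {L R Sg : Type} [Fintype L] [Fintype R] [Fintype Sg]
    [DecidableEq L] [DecidableEq R] [DecidableEq Sg]
    (Eproj : Finset (L × R)) (π : L → R → Sg → Sg) (k K : ℕ) :
    Finset (Vt L R Sg k K × Vt L R Sg k K) :=
  Eproj.biUnion fun e => (Finset.univ : Finset Sg).biUnion fun σL =>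
    (EMpath k K e.1 e.2 σL (π e.1 e.2 σL)).toFinset

/-- The edge set `E = E_L ∪ E_LStars ∪ E_M ∪ E_RStars ∪ E_R ∪ E_Outer` of the directed
spanner instance. -/
def Edges {L R Sg : Type} [Fintype L] [Fintype R] [Fintype Sg]
    [DecidableEq L] [DecidableEq R] [DecidableEq Sg]
    (Eproj : Finset (L × R)) (π : L → R → Sg → Sg) (σ0 : Sg) (k K : ℕ) :
    Finset (Vt L R Sg k K × Vt L R Sg k K) :=
  ELedges L R Sg k K ∪ ELStars L R σ0 k K ∪ EMedges Eproj π k K ∪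
    ERStars L R σ0 k K ∪ ERedges L R Sg k K ∪ EOuter Sg Eproj k K

/-- The vertex set `V = L_Labels ∪ L_Dups ∪ R_Labels ∪ R_Dups ∪ M_Paths` of the directed
spanner instance. -/
def Verts {L R Sg : Type} [Fintype L] [Fintype R] [Fintype Sg]
    [DecidableEq L] [DecidableEq R] [DecidableEq Sg]
    (Eproj : Finset (L × R)) (π : L → R → Sg → Sg) (k K : ℕ) :
    Finset (Vt L R Sg k K) :=
  (Finset.univ.image fun p : L × Sg => SpV.cLab p.1 p.2) ∪
  (Finset.univ.image fun p : L × Fin (numDup Sg k K) => SpV.cDup p.1 p.2) ∪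
  (Finset.univ.image fun p : R × Sg => SpV.xLab p.1 p.2) ∪
  (Finset.univ.image fun p : R × Fin (numDup Sg k K) => SpV.xDup p.1 p.2) ∪
  (Eproj.biUnion fun e => (Finset.univ : Finset Sg).biUnion fun σL =>
    Finset.univ.image fun t : Fin (2 * k - 4) =>
      SpV.mid e.1 e.2 σL (π e.1 e.2 σL) t)

/-- The map `Φ` sending an edge of `E ∖ E_Outer` to the corresponding label set:
`Φ((c_i^l, c_{i,σ})) = {(c_i, σ)}`, `Φ((x_{j,σ}, x_j^l)) = {(x_j, σ)}`, and `Φ(e) = ∅` for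
`e ∈ E_LStars ∪ E_M ∪ E_RStars`. -/
def Phi {L R Sg : Type} [Fintype Sg] {k K : ℕ}
    (e : Vt L R Sg k K × Vt L R Sg k K) : Finset ((L ⊕ R) × Sg) :=
  match e with
  | (Sum.inr (Sum.inl _), Sum.inl (i, σ)) => {(Sum.inl i, σ)}
  | (Sum.inr (Sum.inr (Sum.inl (j, σ))), Sum.inr (Sum.inr (Sum.inr (Sum.inl _)))) =>
      {(Sum.inr j, σ)}
  | _ => ∅

/-- The fractional solution `y'` built from a solution `y*` of the projection games SDP:
`y'_S = 0` if `S` contains an edge of `E_Outer`, and `y'_S = y*_{Φ(S)}` otherwise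
(where `Φ(S) = ⋃_{e ∈ S} Φ(e)`). -/
def yPrime {L R Sg : Type} [Fintype L] [Fintype R] [Fintype Sg]
    [DecidableEq L] [DecidableEq R] [DecidableEq Sg]
    (Eproj : Finset (L × R)) (k K : ℕ) (ystar : Finset ((L ⊕ R) × Sg) → ℝ)
    (S : Finset (Vt L R Sg k K × Vt L R Sg k K)) : ℝ :=
  if (S ∩ EOuter Sg Eproj k K).Nonempty then 0 else ystar (S.biUnion Phi)

end Spanner

/-! An outer edge `(c_i^l, x_j^l)` leaves a source and enters a sink of `G`, so a path of a
spanner can use it only to span that very edge. Hence replacing every outer edge of `S` by the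
path `c_i^l → c_{i,1} → w_{i,j,1,π(1),1} → ⋯ → x_{j,π(1)} → x_j^l` of `2k − 1` edges keeps a
`(2k−1)`-spanner. Each replacement adds at most three edges not already in `S`: for `k = 2` it has
only three edges, and for `k ≥ 3` every edge of a middle path has an inner endpoint `w` whose only
in- and out-edges lie on that path, so every spanner already contains it. -/

namespace Spanner

variable {V : Type*}

theorem pathEdges_cons_cons (a b : V) (l : List V) :
    pathEdges (a :: b :: l) = (a, b) :: pathEdges (b :: l) := rfl

theorem length_pathEdges (vs : List V) : (pathEdges vs).length = vs.length - 1 := by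
  simp [pathEdges]

theorem map_snd_pathEdges (vs : List V) : (pathEdges vs).map Prod.snd = vs.tail :=
  List.map_snd_zip (by simp)

theorem map_fst_pathEdges : ∀ vs : List V, (pathEdges vs).map Prod.fst = vs.dropLast
  | [] | [_] => rfl
  | a :: b :: l => by
    rw [pathEdges_cons_cons, List.map_cons, map_fst_pathEdges (b :: l), List.dropLast_cons_cons]

theorem isChain_pathEdges : ∀ vs : List V, (pathEdges vs).IsChain fun e f => e.2 = f.1
  | [] | [_] | [_, _] => by simp [pathEdges]
  | a :: b :: c :: l => by
    rw [pathEdges_cons_cons, pathEdges_cons_cons]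
    exact .cons_cons rfl (pathEdges_cons_cons b c l ▸ isChain_pathEdges (b :: c :: l))

theorem pathEdges_append_singleton : ∀ (l : List V) (hl : l ≠ []) (b : V),
    pathEdges (l ++ [b]) = pathEdges l ++ [(l.getLast hl, b)]
  | [a], _, b => rfl
  | a :: c :: t, _, b => by
    change (a, c) :: pathEdges (c :: t ++ [b]) = _
    rw [pathEdges_append_singleton (c :: t) (List.cons_ne_nil _ _), List.getLast_cons_cons]
    rfl

theorem pathEdges_cons_append_singleton (a : V) {l : List V} (hl : l ≠ []) (b : V) :
    pathEdges (a :: (l ++ [b])) = (a, l.head hl) :: (pathEdges l ++ [(l.getLast hl, b)]) := by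
  obtain ⟨c, t, rfl⟩ := List.exists_cons_of_ne_nil hl
  rw [List.cons_append, pathEdges_cons_cons, ← List.cons_append, pathEdges_append_singleton]
  rfl

theorem fst_mem_of_mem_pathEdges {vs : List V} {e : V × V} (he : e ∈ pathEdges vs) :
    e.1 ∈ vs :=
  (List.of_mem_zip he).1

theorem snd_mem_of_mem_pathEdges {vs : List V} {e : V × V} (he : e ∈ pathEdges vs) :
    e.2 ∈ vs :=
  List.mem_of_mem_tail (List.of_mem_zip he).2

theorem fst_mem_or_snd_mem_of_mem_pathEdges {a b : V} {l : List V} (hl : l ≠ [])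
    {e : V × V} (he : e ∈ pathEdges (a :: (l ++ [b]))) : e.1 ∈ l ∨ e.2 ∈ l := by
  rw [pathEdges_cons_append_singleton a hl] at he
  rcases List.mem_cons.1 he with rfl | he
  · exact Or.inr (List.head_mem hl)
  rcases List.mem_append.1 he with he | he
  · exact Or.inl (fst_mem_of_mem_pathEdges he)
  · rw [List.mem_singleton.1 he]
    exact Or.inl (List.getLast_mem hl)

theorem eq_of_mem_pathEdges_of_fst_eq {vs : List V} (hvs : vs.Nodup) {e f : V × V}
    (he : e ∈ pathEdges vs) (hf : f ∈ pathEdges vs) (h : e.1 = f.1) : e = f :=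
  List.inj_on_of_nodup_map (by rw [map_fst_pathEdges]; exact hvs.sublist vs.dropLast_sublist)
    he hf h

theorem eq_of_mem_pathEdges_of_snd_eq {vs : List V} (hvs : vs.Nodup) {e f : V × V}
    (he : e ∈ pathEdges vs) (hf : f ∈ pathEdges vs) (h : e.2 = f.2) : e = f :=
  List.inj_on_of_nodup_map (by rw [map_snd_pathEdges]; exact hvs.sublist vs.tail_sublist)
    he hf h

end Spanner

section DirPath

open Spanner

variable {V : Type*} [DecidableEq V] {S T : Finset (V × V)} {u v : V} {p : List (V × V)}

theorem isDirPath_pathEdges {a b : V} {l : List V} (hnd : (a :: (l ++ [b])).Nodup)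
    (hS : ∀ e ∈ pathEdges (a :: (l ++ [b])), e ∈ S) :
    IsDirPath S a b (pathEdges (a :: (l ++ [b]))) := by
  have hsnd := map_snd_pathEdges (a :: (l ++ [b]))
  obtain ⟨c, w, hw⟩ := List.exists_cons_of_ne_nil (List.concat_ne_nil b l)
  refine ⟨?_, hS, ?_, ?_, isChain_pathEdges _, ?_⟩
  · rw [hw, pathEdges_cons_cons]; exact List.cons_ne_nil _ _
  · rw [hw]; rfl
  · rw [← List.getLast?_map, hsnd]; simp
  · rwa [hsnd]

theorem IsDirPath.of_forall_mem (h : IsDirPath S u v p) (hT : ∀ e ∈ p, e ∈ T) :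
    IsDirPath T u v p :=
  ⟨h.1, hT, h.2.2⟩

theorem IsDirPath.exists_mem_fst_eq (h : IsDirPath S u v p) : ∃ e ∈ S, e.1 = u := by
  obtain ⟨hne, hS, hhead, -⟩ := h
  rw [List.head?_eq_some_head hne, Option.map_some, Option.some_inj] at hhead
  exact ⟨_, hS _ (List.head_mem hne), hhead⟩

theorem IsDirPath.exists_mem_snd_eq (h : IsDirPath S u v p) : ∃ e ∈ S, e.2 = v := by
  obtain ⟨hne, hS, -, hlast, -⟩ := h
  rw [List.getLast?_eq_some_getLast hne, Option.map_some, Option.some_inj] at hlast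
  exact ⟨_, hS _ (List.getLast_mem hne), hlast⟩

theorem IsDirPath.eq_of_mem (h : IsDirPath S u v p) {f : V × V} (hf : f ∈ p)
    (hin : ∀ e ∈ S, e.2 ≠ f.1) (hout : ∀ e ∈ S, e.1 ≠ f.2) : f = (u, v) := by
  obtain ⟨hne, hS, hhead, hlast, hchain, -⟩ := h
  obtain ⟨n, hn, rfl⟩ := List.mem_iff_getElem.1 hf
  have hchain := List.isChain_iff_getElem.1 hchain
  have hlast' : n + 1 = p.length := by
    by_contra h'
    exact hout _ (hS _ (List.getElem_mem (by omega : n + 1 < p.length))) (hchain n (by omega)).symm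
  obtain rfl : n = 0 := by
    by_contra h'
    obtain ⟨m, rfl⟩ := Nat.exists_eq_succ_of_ne_zero h'
    exact hin _ (hS _ (List.getElem_mem (by omega : m < p.length))) (hchain m hn)
  rw [List.head?_eq_some_head hne, List.head_eq_getElem, Option.map_some,
    Option.some_inj] at hhead
  rw [List.getLast?_eq_some_getLast hne, List.getLast_eq_getElem, Option.map_some,
    Option.some_inj] at hlast
  simp only [zero_add] at hlast'
  simp only [← hhead, ← hlast, hlast', Nat.sub_self]

end DirPath

section IsSpanner

variable {V : Type*} [DecidableEq V] {E S S' O : Finset (V × V)} {t : ℕ} {f : V × V}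

theorem IsSpanner.mem_of_forall_fst_eq (hS : IsSpanner E S t) (hf : f ∈ E)
    (huniq : ∀ e ∈ E, e.1 = f.1 → e = f) : f ∈ S := by
  obtain ⟨p, hp, -⟩ := hS.2 f hf
  obtain ⟨e, he, he1⟩ := hp.exists_mem_fst_eq
  rwa [← huniq e (hS.1 he) he1]

theorem IsSpanner.mem_of_forall_snd_eq (hS : IsSpanner E S t) (hf : f ∈ E)
    (huniq : ∀ e ∈ E, e.2 = f.2 → e = f) : f ∈ S := by
  obtain ⟨p, hp, -⟩ := hS.2 f hf
  obtain ⟨e, he, he2⟩ := hp.exists_mem_snd_eq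
  rwa [← huniq e (hS.1 he) he2]

theorem IsSpanner.of_detours (hS : IsSpanner E S t) (hS'E : S' ⊆ E) (hkeep : S \ O ⊆ S')
    (hO : ∀ f ∈ O, ∀ e ∈ E, e.2 ≠ f.1 ∧ e.1 ≠ f.2)
    (hdetour : ∀ f ∈ S ∩ O, ∃ p, IsDirPath S' f.1 f.2 p ∧ p.length ≤ t) :
    IsSpanner E S' t := by
  refine ⟨hS'E, fun e he => ?_⟩
  by_cases heSO : e ∈ S ∩ O
  · exact hdetour e heSO
  obtain ⟨p, hp, hlen⟩ := hS.2 e he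
  refine ⟨p, hp.of_forall_mem fun f hf => hkeep (Finset.mem_sdiff.2 ⟨hp.2.1 f hf, ?_⟩), hlen⟩
  intro hfO
  have hfe : f = e := hp.eq_of_mem hf (fun g hg => (hO f hfO g (hS.1 hg)).1)
    (fun g hg => (hO f hfO g (hS.1 hg)).2)
  exact heSO (Finset.mem_inter.2 ⟨hfe ▸ hp.2.1 f hf, hfe ▸ hfO⟩)

end IsSpanner

namespace Spanner

open SpV

section Paths

variable {L R Sg : Type} [Fintype Sg] {k K : ℕ} {i : L} {j : R} {σL σR : Sg}

theorem mem_midVerts {v : Vt L R Sg k K} :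
    v ∈ midVerts k K i j σL σR ↔
      v = cLab i σL ∨ (∃ t, v = mid i j σL σR t) ∨ v = xLab j σR := by
  simp [midVerts, eq_comm]

theorem nodup_midVerts : (midVerts k K i j σL σR).Nodup := by
  simp only [midVerts, List.cons_append, List.nodup_cons, List.nodup_append, List.mem_append,
    List.mem_map, List.mem_singleton]
  refine ⟨by simp [SpV.cLab, SpV.mid, SpV.xLab], (List.nodup_finRange _).map ?_, by simp, ?_⟩
  · intro a b h
    simpa [SpV.mid] using h
  · simp [SpV.mid, SpV.xLab]

def detourVerts (k K : ℕ) (i : L) (j : R) (σL σR : Sg) (l : Fin (numDup Sg k K)) :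
    List (Vt L R Sg k K) :=
  cDup i l :: (midVerts k K i j σL σR ++ [xDup j l])

theorem nodup_detourVerts {l : Fin (numDup Sg k K)} : (detourVerts k K i j σL σR l).Nodup := by
  simp only [detourVerts, List.nodup_cons, List.nodup_append, List.mem_append, mem_midVerts,
    List.mem_singleton]
  refine ⟨?_, nodup_midVerts, by simp, ?_⟩
  · rintro ((h | ⟨t, h⟩ | h) | h) <;> simp [SpV.cDup, SpV.cLab, SpV.mid, SpV.xLab, SpV.xDup] at h
  · rintro a (rfl | ⟨t, rfl⟩ | rfl) b rfl <;> simp [SpV.cLab, SpV.mid, SpV.xLab, SpV.xDup]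

theorem pathEdges_detourVerts {l : Fin (numDup Sg k K)} :
    pathEdges (detourVerts k K i j σL σR l) =
      (cDup i l, cLab i σL) :: (EMpath k K i j σL σR ++ [(xLab j σR, xDup j l)]) := by
  rw [detourVerts, pathEdges_cons_append_singleton _ (by simp [midVerts])]
  simp [EMpath, midVerts]

theorem length_pathEdges_detourVerts (hk : 2 ≤ k) {l : Fin (numDup Sg k K)} :
    (pathEdges (detourVerts k K i j σL σR l)).length = 2 * k - 1 := by
  simp only [length_pathEdges, detourVerts, midVerts, List.length_cons, List.length_append,
    List.length_map, List.length_finRange, List.length_nil]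
  omega

end Paths

section Instance

variable {L R Sg : Type} [Fintype L] [Fintype R] [Fintype Sg]
  [DecidableEq L] [DecidableEq R] [DecidableEq Sg]
  {Eproj : Finset (L × R)} {π : L → R → Sg → Sg} {σ0 : Sg} {k K : ℕ}
  {e : Vt L R Sg k K × Vt L R Sg k K}

theorem exists_of_mem_EOuter (he : e ∈ EOuter Sg Eproj k K) :
    ∃ i j l, e = (cDup i l, xDup j l) := by
  obtain ⟨⟨⟨i, j⟩, l⟩, -, rfl⟩ := Finset.mem_image.1 he
  exact ⟨i, j, l, rfl⟩

theorem mem_Edges_cases (he : e ∈ Edges Eproj π σ0 k K) :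
    (∃ i l σ, e = (cDup i l, cLab i σ)) ∨ (∃ i σ σ', e = (cLab i σ, cLab i σ')) ∨
      (∃ i j σL, e ∈ EMpath k K i j σL (π i j σL)) ∨ (∃ j σ σ', e = (xLab j σ, xLab j σ')) ∨
      (∃ j l σ, e = (xLab j σ, xDup j l)) ∨ ∃ i j l, e = (cDup i l, xDup j l) := by
  simp only [Edges, ELedges, ELStars, EMedges, ERStars, ERedges, Finset.mem_union,
    Finset.mem_image, Finset.mem_filter, Finset.mem_univ, Finset.mem_biUnion, List.mem_toFinset,
    true_and] at he
  rcases he with ((((⟨⟨i, l, σ⟩, rfl⟩ | ⟨⟨i, σ⟩, -, rfl⟩ | ⟨⟨i, σ⟩, -, rfl⟩) |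
    ⟨⟨i, j⟩, -, σL, he⟩) | ⟨⟨j, σ⟩, -, rfl⟩ | ⟨⟨j, σ⟩, -, rfl⟩) | ⟨⟨j, l, σ⟩, rfl⟩) | he
  · exact .inl ⟨i, l, σ, rfl⟩
  · exact .inr <| .inl ⟨i, σ0, σ, rfl⟩
  · exact .inr <| .inl ⟨i, σ, σ0, rfl⟩
  · exact .inr <| .inr <| .inl ⟨i, j, σL, he⟩
  · exact .inr <| .inr <| .inr <| .inl ⟨j, σ0, σ, rfl⟩
  · exact .inr <| .inr <| .inr <| .inl ⟨j, σ, σ0, rfl⟩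
  · exact .inr <| .inr <| .inr <| .inr <| .inl ⟨j, l, σ, rfl⟩
  · exact .inr <| .inr <| .inr <| .inr <| .inr <| exists_of_mem_EOuter he

theorem snd_ne_cDup (he : e ∈ Edges Eproj π σ0 k K) (i : L) (l : Fin (numDup Sg k K)) :
    e.2 ≠ cDup i l := by
  rcases mem_Edges_cases he with ⟨_, _, _, rfl⟩ | ⟨_, _, _, rfl⟩ | ⟨_, _, _, he⟩ | ⟨_, _, _, rfl⟩ |
    ⟨_, _, _, rfl⟩ | ⟨_, _, _, rfl⟩
  case inr.inr.inl =>
    rcases mem_midVerts.1 (snd_mem_of_mem_pathEdges he) with h | ⟨_, h⟩ | h <;>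
      simp [h, SpV.cLab, SpV.mid, SpV.xLab, SpV.cDup]
  all_goals simp [SpV.cLab, SpV.xLab, SpV.xDup, SpV.cDup]

theorem fst_ne_xDup (he : e ∈ Edges Eproj π σ0 k K) (j : R) (l : Fin (numDup Sg k K)) :
    e.1 ≠ xDup j l := by
  rcases mem_Edges_cases he with ⟨_, _, _, rfl⟩ | ⟨_, _, _, rfl⟩ | ⟨_, _, _, he⟩ | ⟨_, _, _, rfl⟩ |
    ⟨_, _, _, rfl⟩ | ⟨_, _, _, rfl⟩
  case inr.inr.inl =>
    rcases mem_midVerts.1 (fst_mem_of_mem_pathEdges he) with h | ⟨_, h⟩ | h <;>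
      simp [h, SpV.cLab, SpV.mid, SpV.xLab, SpV.xDup]
  all_goals simp [SpV.cLab, SpV.xLab, SpV.xDup, SpV.cDup]

theorem mem_EMpath_of_mid_mem (he : e ∈ Edges Eproj π σ0 k K) {i : L} {j : R} {σL σR : Sg}
    {t : Fin (2 * k - 4)} (h : e.1 = mid i j σL σR t ∨ e.2 = mid i j σL σR t) :
    e ∈ EMpath k K i j σL σR := by
  rcases mem_Edges_cases he with ⟨_, _, _, rfl⟩ | ⟨_, _, _, rfl⟩ | ⟨i', j', σL', he⟩ |
    ⟨_, _, _, rfl⟩ | ⟨_, _, _, rfl⟩ | ⟨_, _, _, rfl⟩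
  case inr.inr.inl =>
    obtain ⟨w, hw, rfl⟩ : ∃ w ∈ midVerts k K i' j' σL' (π i' j' σL'), w = mid i j σL σR t :=
      h.elim (fun h => ⟨_, fst_mem_of_mem_pathEdges he, h⟩)
        (fun h => ⟨_, snd_mem_of_mem_pathEdges he, h⟩)
    rcases mem_midVerts.1 hw with h | ⟨_, h⟩ | h <;>
      simp only [SpV.cLab, SpV.mid, SpV.xLab, reduceCtorEq, Sum.inr.injEq, Prod.mk.injEq] at h
    obtain ⟨rfl, rfl, rfl, rfl, -⟩ := h
    exact he
  all_goals simp [SpV.cLab, SpV.xLab, SpV.xDup, SpV.cDup, SpV.mid] at h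

variable (Eproj) in
def outerIdx (S : Finset (Vt L R Sg k K × Vt L R Sg k K)) :
    Finset ((L × R) × Fin (numDup Sg k K)) :=
  (Eproj ×ˢ Finset.univ).filter fun q => (cDup q.1.1 q.2, xDup q.1.2 q.2) ∈ S

variable {S : Finset (Vt L R Sg k K × Vt L R Sg k K)} {t : ℕ} {i : L} {j : R} {σL : Sg}
  {f : Vt L R Sg k K × Vt L R Sg k K}

theorem mem_Edges_of_mem_EMpath (hij : (i, j) ∈ Eproj) (hf : f ∈ EMpath k K i j σL (π i j σL)) :
    f ∈ Edges Eproj π σ0 k K := by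
  simp only [Edges, Finset.mem_union]
  exact .inl <| .inl <| .inl <| .inr <| Finset.mem_biUnion.2
    ⟨(i, j), hij, Finset.mem_biUnion.2 ⟨σL, Finset.mem_univ _, List.mem_toFinset.2 hf⟩⟩

theorem mem_of_mem_EMpath_of_isSpanner (hk : 3 ≤ k) (hS : IsSpanner (Edges Eproj π σ0 k K) S t)
    (hij : (i, j) ∈ Eproj) (hf : f ∈ EMpath k K i j σL (π i j σL)) : f ∈ S := by
  have hfE : f ∈ Edges Eproj π σ0 k K := mem_Edges_of_mem_EMpath hij hf
  have hinner : ((List.finRange (2 * k - 4)).map fun t =>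
      (mid i j σL (π i j σL) t : Vt L R Sg k K)) ≠ [] := by
    simp only [ne_eq, List.map_eq_nil_iff, List.finRange_eq_nil_iff]
    omega
  rcases fst_mem_or_snd_mem_of_mem_pathEdges hinner hf with h | h <;>
    obtain ⟨t, -, ht⟩ := List.mem_map.1 h
  · exact hS.mem_of_forall_fst_eq hfE fun e he he1 => eq_of_mem_pathEdges_of_fst_eq
      nodup_midVerts (mem_EMpath_of_mid_mem he (.inl (he1.trans ht.symm))) hf he1
  · exact hS.mem_of_forall_snd_eq hfE fun e he he2 => eq_of_mem_pathEdges_of_snd_eq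
      nodup_midVerts (mem_EMpath_of_mid_mem he (.inr (he2.trans ht.symm))) hf he2

variable {l : Fin (numDup Sg k K)}

theorem mem_Edges_of_mem_detour (hij : (i, j) ∈ Eproj)
    (hf : f ∈ pathEdges (detourVerts k K i j σL (π i j σL) l)) : f ∈ Edges Eproj π σ0 k K := by
  rw [pathEdges_detourVerts] at hf
  rcases List.mem_cons.1 hf with rfl | hf
  · simp only [Edges, Finset.mem_union]
    exact .inl <| .inl <| .inl <| .inl <| .inl <| Finset.mem_image.2
      ⟨(i, l, σL), Finset.mem_univ _, rfl⟩
  rcases List.mem_append.1 hf with hf | hf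
  · exact mem_Edges_of_mem_EMpath hij hf
  · rw [List.mem_singleton.1 hf]
    simp only [Edges, Finset.mem_union]
    exact .inl <| .inr <| Finset.mem_image.2 ⟨(j, l, π i j σL), Finset.mem_univ _, rfl⟩

theorem notMem_EOuter_of_mem_detour {σR : Sg} (hf : f ∈ pathEdges (detourVerts k K i j σL σR l)) :
    f ∉ EOuter Sg Eproj k K := by
  intro hO
  obtain ⟨i', j', l', rfl⟩ := exists_of_mem_EOuter hO
  rw [pathEdges_detourVerts] at hf
  simp only [List.mem_cons, List.mem_append, List.not_mem_nil, or_false, Prod.mk.injEq] at hf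
  rcases hf with ⟨-, h⟩ | hf | ⟨h, -⟩
  · simp [SpV.xDup, SpV.cLab] at h
  · rcases mem_midVerts.1 (fst_mem_of_mem_pathEdges hf) with h | ⟨_, h⟩ | h <;>
      simp [SpV.cDup, SpV.cLab, SpV.mid, SpV.xLab] at h
  · simp [SpV.cDup, SpV.xLab] at h

theorem card_detour_sdiff_le (hk : 2 ≤ k) (hS : IsSpanner (Edges Eproj π σ0 k K) S t)
    (hij : (i, j) ∈ Eproj) :
    ((pathEdges (detourVerts k K i j σL (π i j σL) l)).toFinset \ S).card ≤ 3 := by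
  rcases (show k = 2 ∨ 3 ≤ k by omega) with rfl | hk3
  · calc _ ≤ (pathEdges (detourVerts 2 K i j σL (π i j σL) l)).toFinset.card :=
          Finset.card_le_card Finset.sdiff_subset
      _ ≤ (pathEdges (detourVerts 2 K i j σL (π i j σL) l)).length := List.toFinset_card_le _
      _ = 3 := length_pathEdges_detourVerts le_rfl
  · calc _ ≤ ({(cDup i l, cLab i σL), (xLab j (π i j σL), xDup j l)} :
          Finset (Vt L R Sg k K × Vt L R Sg k K)).card := Finset.card_le_card ?_
      _ ≤ 3 := Finset.card_le_two.trans (by norm_num)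
    intro f hf
    rw [Finset.mem_sdiff, List.mem_toFinset, pathEdges_detourVerts] at hf
    obtain ⟨hf, hfS⟩ := hf
    simp only [List.mem_cons, List.mem_append, List.not_mem_nil, or_false] at hf
    rcases hf with rfl | hf | rfl
    · exact Finset.mem_insert_self _ _
    · exact absurd (mem_of_mem_EMpath_of_isSpanner hk3 hS hij hf) hfS
    · exact Finset.mem_insert_of_mem (Finset.mem_singleton_self _)

variable (Eproj π σ0) in
def replaceOuter (S : Finset (Vt L R Sg k K × Vt L R Sg k K)) :
    Finset (Vt L R Sg k K × Vt L R Sg k K) :=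
  S \ EOuter Sg Eproj k K ∪ (outerIdx Eproj S).biUnion fun q =>
    (pathEdges (detourVerts k K q.1.1 q.1.2 σ0 (π q.1.1 q.1.2 σ0) q.2)).toFinset

theorem card_outerIdx_le : (outerIdx Eproj S).card ≤ (S ∩ EOuter Sg Eproj k K).card := by
  refine Finset.card_le_card_of_injOn (fun q => (cDup q.1.1 q.2, xDup q.1.2 q.2)) ?_ ?_
  · intro q hq
    obtain ⟨hqE, hqS⟩ := Finset.mem_filter.1 hq
    exact Finset.mem_inter.2 ⟨hqS, Finset.mem_image_of_mem _ hqE⟩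
  · rintro ⟨⟨i, j⟩, l⟩ - ⟨⟨i', j'⟩, l'⟩ - h
    simp only [SpV.cDup, SpV.xDup, Prod.mk.injEq, Sum.inl.injEq, Sum.inr.injEq] at h
    obtain ⟨⟨rfl, rfl⟩, rfl, -⟩ := h
    rfl

theorem isSpanner_replaceOuter (hk : 2 ≤ k) (hS : IsSpanner (Edges Eproj π σ0 k K) S t)
    (ht : 2 * k - 1 ≤ t) : IsSpanner (Edges Eproj π σ0 k K) (replaceOuter Eproj π σ0 S) t := by
  refine hS.of_detours ?_ Finset.subset_union_left ?_ ?_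
  · intro f hf
    rcases Finset.mem_union.1 hf with hf | hf
    · exact hS.1 (Finset.mem_sdiff.1 hf).1
    obtain ⟨q, hq, hf⟩ := Finset.mem_biUnion.1 hf
    exact mem_Edges_of_mem_detour (Finset.mem_product.1 (Finset.mem_filter.1 hq).1).1
      (List.mem_toFinset.1 hf)
  · intro f hf e he
    obtain ⟨i, j, l, rfl⟩ := exists_of_mem_EOuter hf
    exact ⟨snd_ne_cDup he i l, fst_ne_xDup he j l⟩
  · intro f hf
    obtain ⟨hfS, hfO⟩ := Finset.mem_inter.1 hf
    obtain ⟨q, hq, rfl⟩ := Finset.mem_image.1 hfO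
    refine ⟨_, isDirPath_pathEdges nodup_detourVerts fun e he => Finset.mem_union_right _ <|
      Finset.mem_biUnion.2 ⟨q, Finset.mem_filter.2 ⟨hq, hfS⟩, List.mem_toFinset.2 he⟩,
      (length_pathEdges_detourVerts hk).trans_le ht⟩

theorem replaceOuter_inter_EOuter : replaceOuter Eproj π σ0 S ∩ EOuter Sg Eproj k K = ∅ := by
  refine Finset.eq_empty_of_forall_notMem fun f hf => ?_
  obtain ⟨hf, hfO⟩ := Finset.mem_inter.1 hf
  rcases Finset.mem_union.1 hf with hf | hf
  · exact (Finset.mem_sdiff.1 hf).2 hfO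
  · obtain ⟨q, -, hf⟩ := Finset.mem_biUnion.1 hf
    exact notMem_EOuter_of_mem_detour (List.mem_toFinset.1 hf) hfO

theorem card_replaceOuter_le (hk : 2 ≤ k) (hS : IsSpanner (Edges Eproj π σ0 k K) S t) :
    (replaceOuter Eproj π σ0 S).card ≤ 3 * S.card := by
  set O := EOuter Sg Eproj k K
  set detour := fun q : (L × R) × Fin (numDup Sg k K) =>
    (pathEdges (detourVerts k K q.1.1 q.1.2 σ0 (π q.1.1 q.1.2 σ0) q.2)).toFinset
  have hsub : replaceOuter Eproj π σ0 S ⊆ S \ O ∪ (outerIdx Eproj S).biUnion (detour · \ S) := by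
    intro f hf
    rcases Finset.mem_union.1 hf with hf | hf
    · exact Finset.mem_union_left _ hf
    obtain ⟨q, hq, hfq⟩ := Finset.mem_biUnion.1 hf
    by_cases hfS : f ∈ S
    · exact Finset.mem_union_left _ (Finset.mem_sdiff.2
        ⟨hfS, notMem_EOuter_of_mem_detour (List.mem_toFinset.1 hfq)⟩)
    · exact Finset.mem_union_right _ (Finset.mem_biUnion.2 ⟨q, hq, Finset.mem_sdiff.2 ⟨hfq, hfS⟩⟩)
  calc (replaceOuter Eproj π σ0 S).card
      ≤ (S \ O).card + ∑ q ∈ outerIdx Eproj S, (detour q \ S).card :=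
        (Finset.card_le_card hsub).trans <| (Finset.card_union_le _ _).trans <|
          Nat.add_le_add_left Finset.card_biUnion_le _
    _ ≤ (S \ O).card + ∑ _q ∈ outerIdx Eproj S, 3 := by
        gcongr with q hq
        exact card_detour_sdiff_le hk hS (Finset.mem_product.1 (Finset.mem_filter.1 hq).1).1
    _ ≤ (S \ O).card + 3 * (S ∩ O).card := by
        rw [Finset.sum_const, smul_eq_mul]
        have : (outerIdx Eproj S).card ≤ (S ∩ O).card := card_outerIdx_le
        omega
    _ ≤ 3 * S.card := by
        rw [← Finset.card_sdiff_add_card_inter S O]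
        omega

end Instance

end Spanner

theorem directed_spanner_avoid_outer_edges_general
    {L R Sg : Type} [Fintype L] [Fintype R] [Fintype Sg]
    [DecidableEq L] [DecidableEq R] [DecidableEq Sg]
    (Eproj : Finset (L × R)) (π : L → R → Sg → Sg) (σ0 : Sg) (k K : ℕ)
    (hk : 2 ≤ k) :
    ∀ S : Finset (Spanner.Vt L R Sg k K × Spanner.Vt L R Sg k K),
      IsSpanner (Spanner.Edges Eproj π σ0 k K) S (2 * k - 1) →
      ∃ S' : Finset (Spanner.Vt L R Sg k K × Spanner.Vt L R Sg k K),
        IsSpanner (Spanner.Edges Eproj π σ0 k K) S' (2 * k - 1) ∧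
        S' ∩ Spanner.EOuter Sg Eproj k K = ∅ ∧ S'.card ≤ 3 * S.card := by
  intro S hS
  exact ⟨Spanner.replaceOuter Eproj π σ0 S, Spanner.isSpanner_replaceOuter hk hS le_rfl,
    Spanner.replaceOuter_inter_EOuter, Spanner.card_replaceOuter_le hk hS⟩

/-- Claim `directOuter`.  In the directed spanner instance `G = (V,E)` built
(with parameters `k ≥ 2`, `K ≥ 1`) from a projection games instance in which every left vertex
has degree exactly `K`: every `(2k−1)`-spanner `S` of `G` can be transformed into a
`(2k−1)`-spanner `S'` with `S' ∩ E_Outer = ∅` and `|S'| ≤ 3|S|`. -/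
theorem directed_spanner_avoid_outer_edges
    {L R Sg : Type} [Fintype L] [Fintype R] [Fintype Sg]
    [DecidableEq L] [DecidableEq R] [DecidableEq Sg]
    (Eproj : Finset (L × R)) (π : L → R → Sg → Sg) (σ0 : Sg) (k K : ℕ)
    (hk : 2 ≤ k) (hK : 1 ≤ K)
    (hdeg : ∀ i : L, (Eproj.filter fun e => e.1 = i).card = K) :
    ∀ S : Finset (Spanner.Vt L R Sg k K × Spanner.Vt L R Sg k K),
      IsSpanner (Spanner.Edges Eproj π σ0 k K) S (2 * k - 1) →
      ∃ S' : Finset (Spanner.Vt L R Sg k K × Spanner.Vt L R Sg k K),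
        IsSpanner (Spanner.Edges Eproj π σ0 k K) S' (2 * k - 1) ∧
        S' ∩ Spanner.EOuter Sg Eproj k K = ∅ ∧ S'.card ≤ 3 * S.card :=
  directed_spanner_avoid_outer_edges_general Eproj π σ0 k K hk
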